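/- Let p ∈ {1,2,3}, let k > 0, t > 0 and c₀, c₁, c₂ ≥ 0, and let x ∈ ℝ³. Then the family ω ∈ ℤ^p ↦ exp(−k‖x + ι(ω)‖₂²/(4t))·(c₀ + c₁‖x + ι(ω)‖₂ + c₂‖x + ι(ω)‖₂²) is summable. -/

import Mathlib

/-!
The Gaussian factor `exp (-2b r²)` absorbs the quadratic polynomial in `r = ‖x + ι ω‖` at the
cost of half its decay. Since `‖v‖² ≤ 2‖x + v‖² + 2‖x‖²`, the shift by `x` costs a constant factor
and another half. For `p ≤ 3` the map `ι` is an isometric coordinate embedding, so the remaining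
Gaussian on `ℤ^p` is a product of one-dimensional Gaussian series over `ℤ`, each dominated by a
geometric series.
-/

/-- For `p ∈ {1,2,3}`, the embedding `ι : ℤ^p → ℝ³` sending `(ω₁,…,ω_p)` to the vector
whose first `p` coordinates are `ω₁,…,ω_p` and whose remaining coordinates are `0`. -/
noncomputable def iotaLat (p : ℕ) (ω : Fin p → ℤ) : EuclideanSpace ℝ (Fin 3) :=
  (WithLp.equiv 2 (Fin 3 → ℝ)).symm fun i => if h : (i : ℕ) < p then (ω ⟨i, h⟩ : ℝ) else 0

open Real

lemma summable_exp_neg_mul_int_sq {c : ℝ} (hc : 0 < c) :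
    Summable fun n : ℤ => exp (-c * (n : ℝ) ^ 2) := by
  have hgeom : Summable fun n : ℕ => exp (-c) ^ n :=
    summable_geometric_of_lt_one (exp_nonneg _) (exp_lt_one_iff.2 (neg_neg_of_pos hc))
  have hnat : Summable fun n : ℕ => exp (-c * (n : ℝ) ^ 2) := by
    refine hgeom.of_nonneg_of_le (fun n => (exp_pos _).le) fun n => ?_
    have hn : (n : ℝ) ≤ (n : ℝ) ^ 2 := by exact_mod_cast Nat.le_self_pow two_ne_zero n
    rw [← exp_nat_mul]
    exact exp_le_exp.2 (by nlinarith)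
  exact .of_nat_of_neg (by simpa using hnat) (by simpa using hnat)

lemma summable_prod_apply_of_nonneg {α : Type*} {f : α → ℝ} (hf0 : 0 ≤ f) (hf : Summable f)
    (n : ℕ) : Summable fun ω : Fin n → α => ∏ i, f (ω i) := by
  induction n with
  | zero => exact .of_finite
  | succ n ih =>
    have hcons := hf.mul_of_nonneg ih hf0 fun ω => Finset.prod_nonneg fun i _ => hf0 _
    refine (Fin.consEquiv fun _ => α).summable_iff.1 ?_
    simpa [Function.comp_def, Fin.consEquiv, Fin.prod_univ_succ] using hcons

lemma norm_iotaLat_sq {p : ℕ} (hp : p ≤ 3) (ω : Fin p → ℤ) :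
    ‖iotaLat p ω‖ ^ 2 = ∑ i, (ω i : ℝ) ^ 2 := by
  rw [EuclideanSpace.norm_eq, sq_sqrt (by positivity)]
  interval_cases p <;> simp [iotaLat, Fin.sum_univ_succ]

lemma summable_exp_neg_mul_norm_iotaLat_sq {p : ℕ} (hp : p ≤ 3) {c : ℝ} (hc : 0 < c) :
    Summable fun ω : Fin p → ℤ => exp (-c * ‖iotaLat p ω‖ ^ 2) := by
  refine (summable_prod_apply_of_nonneg (fun n => (exp_pos _).le)
    (summable_exp_neg_mul_int_sq hc) p).congr fun ω => ?_
  rw [norm_iotaLat_sq hp, Finset.mul_sum, exp_sum]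

lemma sq_mul_exp_neg_mul_sq_le {b : ℝ} (hb : 0 < b) (r : ℝ) :
    r ^ 2 * exp (-b * r ^ 2) ≤ 1 / b := by
  have := (mul_exp_neg_le_exp_neg_one (b * r ^ 2)).trans (exp_le_one_iff.2 (by norm_num))
  rw [le_div_iff₀ hb]
  calc r ^ 2 * exp (-b * r ^ 2) * b = b * r ^ 2 * exp (-(b * r ^ 2)) := by ring_nf
    _ ≤ 1 := this

lemma exp_neg_two_mul_sq_mul_quadratic_le {b r c₀ c₁ c₂ : ℝ} (hb : 0 < b)
    (h0 : 0 ≤ c₀) (h1 : 0 ≤ c₁) (h2 : 0 ≤ c₂) :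
    exp (-(2 * b) * r ^ 2) * (c₀ + c₁ * r + c₂ * r ^ 2) ≤
      (c₀ + c₁ + (c₁ + c₂) / b) * exp (-b * r ^ 2) := by
  set E := exp (-b * r ^ 2)
  have hE1 : E ≤ 1 := exp_le_one_iff.2 (by nlinarith)
  have hEr : r ^ 2 * E ≤ 1 / b := sq_mul_exp_neg_mul_sq_le hb r
  have hpoly : c₀ + c₁ * r + c₂ * r ^ 2 ≤ (c₀ + c₁) + (c₁ + c₂) * r ^ 2 := by
    nlinarith [mul_nonneg h1 (sq_nonneg (r - 1))]
  have hsplit : exp (-(2 * b) * r ^ 2) = E * E := by rw [← exp_add]; ring_nf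
  calc exp (-(2 * b) * r ^ 2) * (c₀ + c₁ * r + c₂ * r ^ 2)
      ≤ E * ((c₀ + c₁) * E + (c₁ + c₂) * (r ^ 2 * E)) := by
        rw [hsplit]
        linear_combination mul_le_mul_of_nonneg_left hpoly (mul_self_nonneg E)
    _ ≤ E * ((c₀ + c₁) * 1 + (c₁ + c₂) * (1 / b)) := by gcongr
    _ = (c₀ + c₁ + (c₁ + c₂) / b) * E := by ring

lemma exp_neg_mul_norm_add_sq_le {E : Type*} [SeminormedAddCommGroup E] {b : ℝ} (hb : 0 ≤ b)
    (x v : E) : exp (-b * ‖x + v‖ ^ 2) ≤ exp (b * ‖x‖ ^ 2) * exp (-(b / 2) * ‖v‖ ^ 2) := by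
  rw [← exp_add, exp_le_exp]
  have hv : ‖v‖ ^ 2 ≤ 2 * (‖x + v‖ ^ 2 + ‖x‖ ^ 2) := by
    calc ‖v‖ ^ 2 ≤ (‖x + v‖ + ‖x‖) ^ 2 := by
          gcongr; simpa using norm_sub_le (x + v) x
      _ ≤ 2 * (‖x + v‖ ^ 2 + ‖x‖ ^ 2) := add_sq_le
  nlinarith

/-- Let `p ∈ {1,2,3}`, `k > 0`, `t > 0`, `c₀, c₁, c₂ ≥ 0` and `x ∈ ℝ³`.
Then the family
`ω ∈ ℤ^p ↦ exp(−k‖x+ι(ω)‖₂²/(4t))·(c₀ + c₁‖x+ι(ω)‖₂ + c₂‖x+ι(ω)‖₂²)` is summable. -/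
theorem eisenstein_majorant_summable (p : ℕ) (hp : p = 1 ∨ p = 2 ∨ p = 3)
    (k t c₀ c₁ c₂ : ℝ) (hk : 0 < k) (ht : 0 < t)
    (h0 : 0 ≤ c₀) (h1 : 0 ≤ c₁) (h2 : 0 ≤ c₂) (x : EuclideanSpace ℝ (Fin 3)) :
    Summable (fun ω : Fin p → ℤ =>
      Real.exp (-k * ‖x + iotaLat p ω‖ ^ 2 / (4 * t)) *
        (c₀ + c₁ * ‖x + iotaLat p ω‖ + c₂ * ‖x + iotaLat p ω‖ ^ 2)) := by
  set b := k / (8 * t)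
  have hb : 0 < b := by positivity
  have hgauss := summable_exp_neg_mul_norm_iotaLat_sq (p := p) (by omega) (half_pos hb)
  refine hgauss.mul_left ((c₀ + c₁ + (c₁ + c₂) / b) * exp (b * ‖x‖ ^ 2)) |>.of_nonneg_of_le
    (fun ω => by positivity) fun ω => ?_
  have hexp : -k * ‖x + iotaLat p ω‖ ^ 2 / (4 * t) = -(2 * b) * ‖x + iotaLat p ω‖ ^ 2 := by
    simp only [b]; field_simp; ring
  rw [hexp, mul_assoc]
  exact (exp_neg_two_mul_sq_mul_quadratic_le hb h0 h1 h2).trans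
    (mul_le_mul_of_nonneg_left (exp_neg_mul_norm_add_sq_le hb.le x _) (by positivity))
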